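/- arXiv:2512.11702 — 5 statements merged into one kernel-verified Lean document; each statement's English description precedes it below -/
import Mathlib

section
/- Let W be the one-dimensional 𝔽₃-representation of H on which h ∈ H acts by multiplication by χ(h). Then the dual module M* is isomorphic, as a representation of G = SL₂(𝔽₃) over 𝔽₃, to the induced representation Ind_H^G W = 𝔽₃[G] ⊗_{𝔽₃[H]} W. Explicitly, with t = [[1,1],[0,1]] (so that {e, t, t²} is a left transversal of H in G), the 𝔽₃-linear map φ determined by φ(x_s) = t^{s−1} ⊗ w for s = 1,2,3 is a G-equivariant isomorphism from M* to Ind_H^G W. -/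
open Matrix MvPolynomial

set_option synthInstance.maxHeartbeats 1000000
set_option maxHeartbeats 1000000

abbrev F3 : Type := ZMod 3
abbrev G3 : Type := Matrix.SpecialLinearGroup (Fin 2) F3
abbrev S3 : Type := MvPolynomial (Fin 3) F3

/-- The fixed basis `v₁, v₂, v₃` of the traceless `2 × 2` matrices over `𝔽₃`. -/
def V : Fin 3 → Matrix (Fin 2) (Fin 2) F3 :=
  ![!![0, 1; -1, 0], !![-1, -1; -1, 1], !![1, -1; -1, -1]]

/-- Coordinates of a traceless matrix with respect to the basis `v₁, v₂, v₃`. -/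
def coordM : Fin 3 → Matrix (Fin 2) (Fin 2) F3 → F3 :=
  ![fun X => X 1 0 - X 0 1, fun X => X 0 0 - X 0 1 - X 1 0, fun X => -(X 0 0 + X 0 1 + X 1 0)]

/-- Matrix of the (dual) action of `g` on `M*`: `g • x_s = ∑ r, (rep g) s r • x_r`, where
`(rep g) s r = x_s (g⁻¹ • v_r) = coordM s (g⁻¹ vᵣ g)`, coming from `(g • f)(v) = f(g⁻¹ • v)`. -/
def rep (g : G3) : Matrix (Fin 3) (Fin 3) F3 :=
  Matrix.of fun s r => coordM s ((g⁻¹ : G3) * V r * (g : Matrix (Fin 2) (Fin 2) F3))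

/-- The action of `g ∈ SL₂(𝔽₃)` on `S = 𝔽₃[x₁,x₂,x₃]` by algebra automorphisms, given by
substituting `x_s ↦ g • x_s = ∑ r, (rep g) s r • x_r`. -/
noncomputable def actS (g : G3) : S3 →ₐ[F3] S3 :=
  MvPolynomial.aeval fun s => ∑ r : Fin 3, rep g s r • MvPolynomial.X r

noncomputable def a1 : S3 := X 0 ^ 2 + X 1 ^ 2 + X 2 ^ 2
noncomputable def a2 : S3 := X 0 * X 1 * X 2
noncomputable def a3 : S3 := X 0 ^ 4 + X 1 ^ 4 + X 2 ^ 4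
noncomputable def bP : S3 := X 0 ^ 4 * X 1 ^ 2 + X 0 ^ 2 * X 2 ^ 4 + X 1 ^ 4 * X 2 ^ 2
noncomputable def av : Fin 3 → S3 := ![a1, a2, a3]

def tm : G3 := ⟨!![1, 1; 0, 1], by decide⟩
def im : G3 := ⟨!![0, 1; -1, 0], by decide⟩
def jm : G3 := ⟨!![1, -1; -1, -1], by decide⟩

/-- The quaternion subgroup `H = ⟨i, j⟩ ≅ Q₈` of `SL₂(𝔽₃)`. -/
def H3 : Subgroup G3 := Subgroup.closure {im, jm}

/-- The character with `χ(±e) = χ(±i) = 1` and `χ(±j) = χ(±k) = -1` (its values off the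
set `{±e, ±i}` are `-1`; only the restriction to `H` is ever used). -/
def chi (g : G3) : F3 :=
  if (g : Matrix (Fin 2) (Fin 2) F3) = 1 ∨ (g : Matrix (Fin 2) (Fin 2) F3) = -1 ∨
     (g : Matrix (Fin 2) (Fin 2) F3) = (im : Matrix (Fin 2) (Fin 2) F3) ∨
     (g : Matrix (Fin 2) (Fin 2) F3) = -(im : Matrix (Fin 2) (Fin 2) F3) then 1 else -1

/-- The `𝔽₃`-submodule `S^H_χ` of `χ`-relative `H`-invariants in `S`. -/
noncomputable def relInv : Submodule F3 S3 where
  carrier := {f | ∀ h ∈ H3, actS h f = chi h • f}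
  add_mem' := by
    intro f g hf hg h hh
    rw [map_add, hf h hh, hg h hh, smul_add]
  zero_mem' := by
    intro h hh
    rw [map_zero, smul_zero]
  smul_mem' := by
    intro c f hf h hh
    rw [_root_.map_smul, hf h hh, smul_comm]

/-- The group algebra `𝔽₃[G]` as an `𝔽₃`-vector space. -/
abbrev FreeG : Type := G3 →₀ F3

/-- Left multiplication by `g` on `𝔽₃[G]`. -/
noncomputable def lmul (g : G3) : FreeG →ₗ[F3] FreeG :=
  Finsupp.lmapDomain F3 F3 (fun a => g * a)

/-- The submodule of relations defining `𝔽₃[G] ⊗_{𝔽₃[H]} W` for the one-dimensional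
`H`-representation `W` with character `χ`: it is spanned by the elements
`(g·h) ⊗ w - g ⊗ (h·w) = e_{gh} - χ(h)·e_g`. -/
noncomputable def IndRel : Submodule F3 FreeG :=
  Submodule.span F3
    {x : FreeG | ∃ g h : G3, h ∈ H3 ∧
      x = Finsupp.single (g * h) 1 - chi h • Finsupp.single g 1}

/-- The induced representation `Ind_H^G W = 𝔽₃[G] ⊗_{𝔽₃[H]} W` (as a vector space). -/
abbrev IndW : Type := FreeG ⧸ IndRel

/-- The `𝔽₃`-linear map `φ : M* → Ind_H^G W` determined by `φ(x_s) = t^{s-1} ⊗ w`, where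
`M*` is identified with `Fin 3 → 𝔽₃` via the dual basis `x₁, x₂, x₃`, and `t^{s-1} ⊗ w`
is the class of `e_{t^{s-1}}`. -/
noncomputable def phi1 : (Fin 3 → F3) →ₗ[F3] IndW :=
  ∑ i : Fin 3, LinearMap.smulRight (LinearMap.proj i)
    (Submodule.Quotient.mk (Finsupp.single (tm ^ (i : ℕ)) (1 : F3)))

/-!
Index the dual basis from `0`, so that `φ(x_s) = tˢ ⊗ w`. The matrix of `g ∈ SL₂(𝔽₃)` on `M*`
is monomial: `g • x_s = χ(h) x_r`, where `g tˢ = tʳ h` with `h ∈ H`, as one checks on the 24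
elements of the group. The same rule describes the action of `g` on the basis `tˢ ⊗ w` of the
induced module, so `φ` is equivariant. Its inverse sends the class of `g = tʳ h` to `χ(h) x_r`;
this is well defined on the induced module because `χ` is a character of `H`.
-/

/-- `H = {iᵃ jᵇ}`, in a form that `decide` can evaluate. -/
def InQ8 (g : G3) : Prop := ∃ a : Fin 4, ∃ b : Fin 2, g = im ^ (a : ℕ) * jm ^ (b : ℕ)

instance : DecidablePred InQ8 := fun _ => inferInstanceAs (Decidable (∃ _, _))

lemma InQ8.mul {a b : G3} (ha : InQ8 a) (hb : InQ8 b) : InQ8 (a * b) := by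
  revert a b
  decide +kernel

lemma InQ8.inv {a : G3} (ha : InQ8 a) : InQ8 a⁻¹ := by
  revert a
  decide +kernel

lemma mem_H3_iff {g : G3} : g ∈ H3 ↔ InQ8 g := by
  constructor
  · intro hg
    induction hg using Subgroup.closure_induction with
    | mem x hx => rcases hx with rfl | rfl <;> decide +kernel
    | one => decide +kernel
    | mul x y _ _ hx hy => exact hx.mul hy
    | inv x _ hx => exact hx.inv
  · rintro ⟨a, b, rfl⟩
    exact mul_mem (pow_mem (Subgroup.subset_closure (.inl rfl)) _)
      (pow_mem (Subgroup.subset_closure (.inr rfl)) _)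

lemma chi_mul_of_mem {a b : G3} (ha : a ∈ H3) (hb : b ∈ H3) : chi (a * b) = chi a * chi b := by
  rw [mem_H3_iff] at ha hb
  revert a b
  decide +kernel

lemma chi_one : chi 1 = 1 := by decide

lemma tm_pow_three : tm ^ 3 = 1 := by decide +kernel

def cosetIdx (g : G3) : Fin 3 := if InQ8 g then 0 else if InQ8 (tm⁻¹ * g) then 1 else 2

def cosetPart (g : G3) : G3 := (tm ^ (cosetIdx g : ℕ))⁻¹ * g

lemma cosetPart_mem (g : G3) : cosetPart g ∈ H3 := by
  rw [mem_H3_iff]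
  revert g
  decide +kernel

lemma eq_cosetIdx_of_mem {g : G3} {s : Fin 3} (h : (tm ^ (s : ℕ))⁻¹ * g ∈ H3) :
    s = cosetIdx g := by
  rw [mem_H3_iff] at h
  revert g s
  decide +kernel

lemma tm_pow_cosetIdx_mul_cosetPart (g : G3) : tm ^ (cosetIdx g : ℕ) * cosetPart g = g :=
  mul_inv_cancel_left _ _

lemma existsUnique_tm_pow_mul (g : G3) : ∃! s : Fin 3, ∃ h ∈ H3, g = tm ^ (s : ℕ) * h := by
  refine ⟨cosetIdx g, ⟨cosetPart g, cosetPart_mem g, (tm_pow_cosetIdx_mul_cosetPart g).symm⟩, ?_⟩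
  rintro s ⟨h, hh, rfl⟩
  exact eq_cosetIdx_of_mem (by rwa [inv_mul_cancel_left])

lemma cosetIdx_mul_of_mem (g : G3) {h : G3} (hh : h ∈ H3) : cosetIdx (g * h) = cosetIdx g :=
  (eq_cosetIdx_of_mem (by rw [← mul_assoc]; exact mul_mem (cosetPart_mem g) hh)).symm

lemma cosetPart_mul_of_mem (g : G3) {h : G3} (hh : h ∈ H3) :
    cosetPart (g * h) = cosetPart g * h := by
  rw [cosetPart, cosetIdx_mul_of_mem g hh, ← mul_assoc, cosetPart]

lemma cosetIdx_tm_pow (s : Fin 3) : cosetIdx (tm ^ (s : ℕ)) = s :=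
  (eq_cosetIdx_of_mem (by rw [inv_mul_cancel]; exact one_mem _)).symm

lemma cosetPart_tm_pow (s : Fin 3) : cosetPart (tm ^ (s : ℕ)) = 1 := by
  rw [cosetPart, cosetIdx_tm_pow, inv_mul_cancel]

def indCoord (g : G3) : Fin 3 → F3 := chi (cosetPart g) • Pi.single (cosetIdx g) 1

lemma indCoord_mul_of_mem (g : G3) {h : G3} (hh : h ∈ H3) :
    indCoord (g * h) = chi h • indCoord g := by
  rw [indCoord, indCoord, cosetIdx_mul_of_mem g hh, cosetPart_mul_of_mem g hh,
    chi_mul_of_mem (cosetPart_mem g) hh, smul_smul, mul_comm]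

lemma indCoord_tm_pow (s : Fin 3) : indCoord (tm ^ (s : ℕ)) = Pi.single s 1 := by
  rw [indCoord, cosetIdx_tm_pow, cosetPart_tm_pow, chi_one, one_smul]

lemma rep_row (g : G3) (s : Fin 3) : (rep g).row s = indCoord (g * tm ^ (s : ℕ)) := by
  have rep_eq : ∀ g : G3, rep g = Matrix.of fun s : Fin 3 => indCoord (g * tm ^ (s : ℕ)) := by
    decide +kernel
  rw [rep_eq g]
  rfl

lemma mk_single_mul_of_mem (g : G3) {h : G3} (hh : h ∈ H3) :
    (Submodule.Quotient.mk (Finsupp.single (g * h) 1) : IndW) =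
      chi h • Submodule.Quotient.mk (Finsupp.single g 1) := by
  rw [← Submodule.Quotient.mk_smul, Submodule.Quotient.eq]
  exact Submodule.subset_span ⟨g, h, hh, rfl⟩

lemma indRel_le_ker_linearCombination_indCoord :
    IndRel ≤ LinearMap.ker (Finsupp.linearCombination F3 indCoord) := by
  rw [IndRel, Submodule.span_le]
  rintro _ ⟨g, h, hh, rfl⟩
  simp only [SetLike.mem_coe, LinearMap.mem_ker, map_sub, map_smul,
    Finsupp.linearCombination_single, one_smul, indCoord_mul_of_mem g hh, sub_self]

noncomputable def indCoordLin : IndW →ₗ[F3] Fin 3 → F3 :=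
  IndRel.liftQ _ indRel_le_ker_linearCombination_indCoord

lemma indCoordLin_mk_single (g : G3) :
    indCoordLin (Submodule.Quotient.mk (Finsupp.single g 1)) = indCoord g := by
  simp [indCoordLin]

lemma phi1_single (s : Fin 3) : phi1 (Pi.single s 1) =
    Submodule.Quotient.mk (Finsupp.single (tm ^ (s : ℕ)) (1 : F3)) := by
  simp [phi1, Pi.single_apply]

lemma phi1_indCoord (g : G3) :
    phi1 (indCoord g) = Submodule.Quotient.mk (Finsupp.single g 1) := by
  rw [indCoord, map_smul, phi1_single, ← mk_single_mul_of_mem _ (cosetPart_mem g),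
    tm_pow_cosetIdx_mul_cosetPart]

lemma indCoordLin_comp_phi1 : indCoordLin ∘ₗ phi1 = LinearMap.id := by
  ext s : 2
  simp only [LinearMap.comp_apply, LinearMap.single_apply]
  rw [phi1_single, indCoordLin_mk_single, indCoord_tm_pow, LinearMap.id_apply]

lemma phi1_comp_indCoordLin : phi1 ∘ₗ indCoordLin = LinearMap.id := by
  ext g : 3
  simp [indCoordLin_mk_single, phi1_indCoord]

lemma phi1_bijective : Function.Bijective phi1 :=
  Function.bijective_iff_has_inverse.2
    ⟨indCoordLin, LinearMap.congr_fun indCoordLin_comp_phi1,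
      LinearMap.congr_fun phi1_comp_indCoordLin⟩

lemma lmul_single (g a : G3) (c : F3) :
    lmul g (Finsupp.single a c) = Finsupp.single (g * a) c :=
  Finsupp.mapDomain_single

lemma indRel_le_comap_lmul (g : G3) : IndRel ≤ IndRel.comap (lmul g) := by
  rw [IndRel, Submodule.span_le]
  rintro _ ⟨a, h, hh, rfl⟩
  refine Submodule.subset_span ⟨g * a, h, hh, ?_⟩
  simp [lmul_single, mul_assoc]

noncomputable def indAct (g : G3) : IndW →ₗ[F3] IndW :=
  IndRel.mapQ IndRel (lmul g) (indRel_le_comap_lmul g)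

lemma phi1_comp_mulVecLin (g : G3) : phi1 ∘ₗ (rep g)ᵀ.mulVecLin = indAct g ∘ₗ phi1 := by
  ext s : 2
  simp only [LinearMap.comp_apply, LinearMap.single_apply, Matrix.mulVecLin_apply]
  rw [Matrix.mulVec_transpose, Matrix.single_one_vecMul, rep_row, phi1_indCoord,
    phi1_single, indAct, Submodule.mapQ_apply, lmul_single]

/-- `{e, t, t²}` is a left transversal of `H` in `G`, and the map `φ` with
`φ(x_s) = t^{s-1} ⊗ w` is a `G`-equivariant isomorphism from `M*` onto
`Ind_H^G W = 𝔽₃[G] ⊗_{𝔽₃[H]} W`.  Here `M*` carries the dual conjugation action (in the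
dual-basis coordinates, `g` acts by the matrix `(rep g)ᵀ`), and `G` acts on the induced
module by left multiplication on the first factor; equivariance is stated as: whenever
`φ(v)` is the class of `u ∈ 𝔽₃[G]`, then `φ(g • v)` is the class of `g · u`. -/
theorem stmt1 :
    ((tm ^ 3 = 1) ∧ ∀ g : G3, ∃! s : Fin 3, ∃ h ∈ H3, g = tm ^ (s : ℕ) * h) ∧
    (∀ s : Fin 3, phi1 (Pi.single s 1) =
      Submodule.Quotient.mk (Finsupp.single (tm ^ (s : ℕ)) (1 : F3))) ∧
    Function.Bijective phi1 ∧
    (∀ (g : G3) (v : Fin 3 → F3) (u : FreeG),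
      phi1 v = Submodule.Quotient.mk u →
        phi1 ((rep g)ᵀ.mulVec v) = Submodule.Quotient.mk (lmul g u)) := by
  refine ⟨⟨tm_pow_three, existsUnique_tm_pow_mul⟩, phi1_single, phi1_bijective, ?_⟩
  intro g v u hu
  calc phi1 ((rep g)ᵀ.mulVec v) = indAct g (phi1 v) :=
        LinearMap.congr_fun (phi1_comp_mulVecLin g) v
    _ = Submodule.Quotient.mk (lmul g u) := by rw [hu]; rfl
end

section
/- The polynomials a₁, a₂, a₃ are algebraically independent over 𝔽₃, and S is a finitely generated module over the subalgebra A = 𝔽₃[a₁,a₂,a₃]; in particular {a₁,a₂,a₃} is a homogeneous system of parameters for S^G. -/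
open Matrix MvPolynomial

set_option synthInstance.maxHeartbeats 1000000
set_option maxHeartbeats 1000000

/-- The subalgebra `A = 𝔽₃[a₁, a₂, a₃] ⊆ S`. -/
noncomputable def Asub : Subalgebra F3 S3 := Algebra.adjoin F3 {a1, a2, a3}

/-! Each variable `xᵢ` is a root of `∏ⱼ (T² - xⱼ²) = T⁶ - a₁T⁴ + (a₃ - a₁²)T² - a₂²`; in
characteristic 3 the middle coefficient `e₂(x₁², x₂², x₃²)` equals `a₃ - a₁²`, so all coefficients
lie in `A`. Hence `S` is integral and of finite type, so finite, over `A`. Since `S` has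
transcendence degree 3 and is algebraic over the subalgebra generated by the three `aᵢ`, they form
a transcendence basis. Finally `A` is Noetherian, so every `A`-submodule of the finite `A`-module
`S` is finitely generated. -/
theorem MvPolynomial.isIntegral_of_isIntegral_X {σ R B : Type*} [CommRing R] [CommRing B]
    [Algebra R B] [Algebra B (MvPolynomial σ R)] [IsScalarTower R B (MvPolynomial σ R)]
    (h : ∀ i, IsIntegral B (X i : MvPolynomial σ R)) :
    Algebra.IsIntegral B (MvPolynomial σ R) := by
  rw [← integralClosure_eq_top_iff, eq_top_iff]
  intro p _
  have hle : Algebra.adjoin R (Set.range (X : σ → MvPolynomial σ R)) ≤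
      (integralClosure B (MvPolynomial σ R)).restrictScalars R :=
    Algebra.adjoin_le (Set.range_subset_iff.mpr h)
  exact hle (by rw [adjoin_range_X]; trivial)

theorem MvPolynomial.finite_of_isIntegral_X {σ R B : Type*} [Finite σ] [CommRing R] [CommRing B]
    [Algebra R B] [Algebra B (MvPolynomial σ R)] [IsScalarTower R B (MvPolynomial σ R)]
    (h : ∀ i, IsIntegral B (X i : MvPolynomial σ R)) : Module.Finite B (MvPolynomial σ R) :=
  have := isIntegral_of_isIntegral_X h
  have := Algebra.FiniteType.of_restrictScalars_finiteType R B (MvPolynomial σ R)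
  Algebra.IsIntegral.finite

theorem MvPolynomial.algebraicIndependent_of_finite_adjoin {ι R : Type*} [Finite ι] [CommRing R]
    [IsDomain R] (x : ι → MvPolynomial ι R)
    [Module.Finite (Algebra.adjoin R (Set.range x)) (MvPolynomial ι R)] :
    AlgebraicIndependent R x :=
  (Algebra.IsAlgebraic.isTranscendenceBasis_of_lift_le_trdeg_of_finite R x
    (by simp [trdeg_of_isDomain])).1

theorem isIntegral_of_sextic {B S : Type*} [CommRing B] [CommRing S] [Algebra B S] {t : S}
    (c₁ c₂ c₃ : B)
    (h : t ^ 6 - algebraMap B S c₁ * t ^ 4 + algebraMap B S c₂ * t ^ 2 - algebraMap B S c₃ = 0) :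
    IsIntegral B t := by
  refine ⟨.X ^ 6 - .C c₁ * .X ^ 4 + .C c₂ * .X ^ 2 - .C c₃, by monicity!, ?_⟩
  simpa using h

theorem prod_sq_sub_sq_of_charP_three {R : Type*} [CommRing R] [CharP R 3] (t x y z : R) :
    (t ^ 2 - x ^ 2) * (t ^ 2 - y ^ 2) * (t ^ 2 - z ^ 2) =
      t ^ 6 - (x ^ 2 + y ^ 2 + z ^ 2) * t ^ 4
        + (x ^ 4 + y ^ 4 + z ^ 4 - (x ^ 2 + y ^ 2 + z ^ 2) ^ 2) * t ^ 2 - (x * y * z) ^ 2 := by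
  linear_combination
    ((x ^ 2 * y ^ 2 + x ^ 2 * z ^ 2 + y ^ 2 * z ^ 2) * t ^ 2) * CharP.cast_eq_zero R 3

theorem isIntegral_X_Asub (i : Fin 3) : IsIntegral Asub (X i : S3) := by
  have mem : ∀ a ∈ ({a1, a2, a3} : Set S3), a ∈ Asub := fun _ ha => Algebra.subset_adjoin ha
  refine isIntegral_of_sextic ⟨a1, mem _ (by simp)⟩ ⟨a3 - a1 ^ 2, ?_⟩ ⟨a2 ^ 2, ?_⟩ ?_
  · exact sub_mem (mem _ (by simp)) (pow_mem (mem _ (by simp)) 2)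
  · exact pow_mem (mem _ (by simp)) 2
  · change X i ^ 6 - a1 * X i ^ 4 + (a3 - a1 ^ 2) * X i ^ 2 - a2 ^ 2 = 0
    unfold a1 a2 a3
    rw [← prod_sq_sub_sq_of_charP_three]
    fin_cases i <;> simp

theorem finite_Asub : Module.Finite Asub S3 :=
  MvPolynomial.finite_of_isIntegral_X isIntegral_X_Asub

/-- `a₁, a₂, a₃` are algebraically independent over `𝔽₃`, and `S` is a finitely generated
module over `A = 𝔽₃[a₁,a₂,a₃]`; in particular (third conjunct) the invariant ring `S^G`
is a finitely generated `A`-module, i.e. `{a₁, a₂, a₃}` is a homogeneous system of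
parameters for `S^G`. -/
theorem stmt3 :
    AlgebraicIndependent F3 av ∧
    Module.Finite Asub S3 ∧
    (Submodule.span Asub {f : S3 | ∀ g : G3, actS g f = f}).FG := by
  have := finite_Asub
  refine ⟨?_, finite_Asub, ?_⟩
  · have range_av : Set.range av = {a1, a2, a3} := by
      ext; simp [av]; tauto
    have : Module.Finite (Algebra.adjoin F3 (Set.range av)) S3 := range_av ▸ finite_Asub
    exact MvPolynomial.algebraicIndependent_of_finite_adjoin av
  · have : Algebra.FiniteType F3 Asub := .adjoin_of_finite (Set.toFinite _)
    have : IsNoetherianRing Asub := Algebra.FiniteType.isNoetherianRing F3 Asub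
    exact IsNoetherian.noetherian _
end

section
/- For every integer d ≥ 1, the 𝔽₃-dimension of the space of homogeneous polynomials of degree d in S that are χ-relative H-invariants equals the binomial coefficient C(⌊(d+1)/2⌋ + 1, 2), and for d = 0 this space is zero. Equivalently, the Hilbert series Σ_{d≥0} dim((S^H_χ)_d) t^d equals (t + t²)/(1 − t²)³ as a formal power series. -/
open Matrix MvPolynomial

set_option synthInstance.maxHeartbeats 1000000
set_option maxHeartbeats 1000000

/-
The generators `i` and `j` act on `x₁, x₂, x₃` by the diagonal sign matrices
`diag(1, -1, -1)` and `diag(-1, -1, 1)`, so `S^H_χ` is spanned by the monomials `x^m` with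
`m₂ + m₃` even and `m₁ + m₂` odd. In degree `d` these exponents have a fixed parity pattern,
`(1, 0, 0)` for `d` odd and `(0, 1, 1)` for `d` even, so they are exactly `2n + pattern` with `n`
of degree `⌊(d - 1)/2⌋`, and stars and bars counts them. Multiplying the resulting series three
times by `1 - t²` takes second differences: the coefficients `C(⌊(d+1)/2⌋ + 1, 2)` become
`⌊(d+1)/2⌋`, then `[d ≥ 1]`, then those of `t + t²`.
-/

namespace MvPolynomial

variable {σ : Type*}

section LinSubst

variable {R : Type*} [Fintype σ] [CommSemiring R]

noncomputable def linSubst (A : Matrix σ σ R) : MvPolynomial σ R →ₐ[R] MvPolynomial σ R :=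
  aeval fun s => ∑ r, A s r • X r

theorem linSubst_mul (A B : Matrix σ σ R) :
    linSubst (A * B) = (linSubst B).comp (linSubst A) := by
  refine algHom_ext fun s => ?_
  simp only [linSubst, AlgHom.comp_apply, aeval_X, map_sum, _root_.map_smul, Finset.smul_sum,
    smul_smul, Matrix.mul_apply, Finset.sum_smul]
  exact Finset.sum_comm

theorem linSubst_one [DecidableEq σ] : linSubst (1 : Matrix σ σ R) = AlgHom.id R _ := by
  refine algHom_ext fun s => ?_
  simp [linSubst, Matrix.one_apply]

theorem linSubst_diagonal_monomial [DecidableEq σ] (ε : σ → R) (m : σ →₀ ℕ) (c : R) :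
    linSubst (Matrix.diagonal ε) (monomial m c) = monomial m ((∏ i, ε i ^ m i) * c) := by
  simp only [linSubst, aeval_monomial, Matrix.diagonal_apply, ite_smul, zero_smul,
    Finset.sum_ite_eq, Finset.mem_univ, if_true, smul_eq_C_mul, mul_pow, ← C_pow]
  rw [Finsupp.prod_fintype _ _ (by simp), Finset.prod_mul_distrib, ← map_prod, monomial_eq,
    Finsupp.prod_fintype _ _ (by simp), algebraMap_eq, C_mul]
  ring

theorem coeff_linSubst_diagonal [DecidableEq σ] (ε : σ → R) (f : MvPolynomial σ R)
    (m : σ →₀ ℕ) : coeff m (linSubst (Matrix.diagonal ε) f) = (∏ i, ε i ^ m i) * coeff m f := by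
  induction f using induction_on' with
  | monomial u c =>
    rw [linSubst_diagonal_monomial, coeff_monomial, coeff_monomial]
    split_ifs with h
    · rw [h]
    · rw [mul_zero]
  | add p q hp hq => rw [map_add, coeff_add, coeff_add, hp, hq, mul_add]

end LinSubst

theorem finrank_restrictSupport {R : Type*} [CommRing R] [StrongRankCondition R]
    (s : Set (σ →₀ ℕ)) : Module.finrank R (restrictSupport R s) = s.ncard := by
  rw [Module.finrank_eq_nat_card_basis (basisRestrictSupport R s), Nat.card_coe_set_eq]

end MvPolynomial

namespace Finsupp

variable {σ : Type*}

theorem ncard_setOf_degree_eq [Fintype σ] (k : ℕ) :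
    {n : σ →₀ ℕ | n.degree = k}.ncard = (Fintype.card σ + k - 1).choose k := by
  classical
  have : {n : σ →₀ ℕ | n.degree = k} = ↑(Finset.univ.finsuppAntidiag k : Finset (σ →₀ ℕ)) := by
    ext n
    simp [degree_eq_sum]
  rw [this, Set.ncard_coe_finset, Finset.card_finsuppAntidiag_nat_eq_choose, Finset.card_univ]

theorem setOf_degree_and_mod_two_eq_image (e : σ →₀ ℕ) (he : ∀ i, e i < 2) (k : ℕ) :
    {m : σ →₀ ℕ | m.degree = 2 * k + e.degree ∧ ∀ i, m i % 2 = e i} =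
      (fun n => 2 • n + e) '' {n | n.degree = k} := by
  ext m
  constructor
  · rintro ⟨hdeg, hpar⟩
    set n := m.mapRange (· / 2) (Nat.zero_div 2)
    have hm : 2 • n + e = m := by
      ext i
      have := hpar i
      simp only [coe_add, coe_smul, Pi.add_apply, Pi.smul_apply, smul_eq_mul, n,
        mapRange_apply]
      omega
    refine ⟨n, ?_, hm⟩
    rw [← hm, map_add, map_nsmul, smul_eq_mul] at hdeg
    simp only [Set.mem_ofPred_eq]
    omega
  · rintro ⟨n, hn, rfl⟩
    refine ⟨by rw [map_add, map_nsmul, smul_eq_mul, hn], fun i => ?_⟩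
    have := he i
    simp only [coe_add, coe_smul, Pi.add_apply, Pi.smul_apply, smul_eq_mul]
    omega

theorem two_nsmul_add_injective (e : σ →₀ ℕ) :
    Function.Injective fun n : σ →₀ ℕ => 2 • n + e := by
  intro n n' h
  ext i
  have := DFunLike.congr_fun h i
  simp only [coe_add, coe_smul, Pi.add_apply, Pi.smul_apply, smul_eq_mul] at this
  omega

theorem ncard_setOf_degree_and_mod_two_eq [Fintype σ] (e : σ →₀ ℕ) (he : ∀ i, e i < 2)
    (k : ℕ) : {m : σ →₀ ℕ | m.degree = 2 * k + e.degree ∧ ∀ i, m i % 2 = e i}.ncard =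
      (Fintype.card σ + k - 1).choose k := by
  rw [setOf_degree_and_mod_two_eq_image e he,
    Set.ncard_image_of_injective _ (two_nsmul_add_injective e), ncard_setOf_degree_eq]

end Finsupp

namespace PowerSeries

theorem mk_mul_one_sub_X_sq_eq_mk {R : Type*} [Ring R] {a b : ℕ → R} (h0 : a 0 = b 0)
    (h1 : a 1 = b 1) (h : ∀ n, a (n + 2) = a n + b (n + 2)) : mk a * (1 - X ^ 2) = mk b := by
  ext n
  rw [mul_sub, mul_one, map_sub, coeff_mul_X_pow', coeff_mk, coeff_mk]
  match n with
  | 0 => simp [h0]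
  | 1 => simp [h1]
  | n + 2 => simp [h]

theorem mk_choose_div_two_mul_one_sub_X_sq_pow_three :
    (mk fun d => (((d + 1) / 2 + 1).choose 2 : ℤ)) * (1 - X ^ 2) ^ 3 = X + X ^ 2 := by
  have first : (mk fun d => (((d + 1) / 2 + 1).choose 2 : ℤ)) * (1 - X ^ 2) =
      mk fun d => (((d + 1) / 2 : ℕ) : ℤ) := by
    refine mk_mul_one_sub_X_sq_eq_mk rfl rfl fun n => ?_
    rw [show (n + 2 + 1) / 2 + 1 = (n + 1) / 2 + 1 + 1 by omega, Nat.choose_succ_succ',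
      show (n + 2 + 1) / 2 = (n + 1) / 2 + 1 by omega, Nat.choose_one_right]
    push_cast
    ring
  have second : (mk fun d => (((d + 1) / 2 : ℕ) : ℤ)) * (1 - X ^ 2) = X * mk 1 := by
    have : X * mk 1 = mk fun d => if d = 0 then (0 : ℤ) else 1 := by
      ext (_ | n) <;> simp [coeff_succ_X_mul]
    refine this ▸ mk_mul_one_sub_X_sq_eq_mk rfl rfl fun n => ?_
    simp only [Nat.add_eq_zero_iff, OfNat.ofNat_ne_zero, and_false, if_false]
    rw [show (n + 2 + 1) / 2 = (n + 1) / 2 + 1 by omega]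
    push_cast
    ring
  calc _ = (mk fun d => (((d + 1) / 2 + 1).choose 2 : ℤ)) * (1 - X ^ 2) * (1 - X ^ 2) *
        ((1 - X) * (1 + X)) := by ring
    _ = X * (1 + X) * (mk 1 * (1 - X)) := by rw [first, second]; ring
    _ = X + X ^ 2 := by rw [mk_one_mul_one_sub_eq_one]; ring

end PowerSeries

theorem eq_zero_of_neg_eq_self {R : Type*} [Ring R] [NoZeroDivisors R] (h2 : (2 : R) ≠ 0)
    {c : R} (h : -c = c) : c = 0 :=
  (mul_eq_zero.1 (by rw [two_mul]; nth_rw 1 [← h]; exact neg_add_cancel c)).resolve_left h2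

theorem neg_one_pow_mul_eq_self_iff {R : Type*} [Ring R] [NoZeroDivisors R] (h2 : (2 : R) ≠ 0)
    {c : R} (hc : c ≠ 0) (n : ℕ) : (-1) ^ n * c = c ↔ Even n := by
  rcases n.even_or_odd with hn | hn
  · simp [hn.neg_one_pow, hn]
  · simpa [hn.neg_one_pow, Nat.not_even_iff_odd.2 hn] using mt (eq_zero_of_neg_eq_self h2) hc

theorem neg_one_pow_mul_eq_neg_self_iff {R : Type*} [Ring R] [NoZeroDivisors R]
    (h2 : (2 : R) ≠ 0) {c : R} (hc : c ≠ 0) (n : ℕ) : (-1) ^ n * c = -c ↔ Odd n := by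
  rcases n.even_or_odd with hn | hn
  · simpa [hn.neg_one_pow, Nat.not_odd_iff_even.2 hn, eq_comm] using
      mt (eq_zero_of_neg_eq_self h2) hc
  · simp [hn.neg_one_pow, hn]

theorem actS_eq_linSubst (g : G3) : actS g = linSubst (rep g) := rfl

def q8 : List G3 := [1, im, im ^ 2, im ^ 3, jm, im * jm, im ^ 2 * jm, im ^ 3 * jm]

theorem mul_mem_q8 : ∀ a ∈ q8, ∀ b ∈ q8, a * b ∈ q8 := by decide +kernel

theorem inv_mem_q8 : ∀ a ∈ q8, a⁻¹ ∈ q8 := by decide +kernel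

theorem rep_mul_of_mem_q8 : ∀ a ∈ q8, ∀ b ∈ q8, rep (a * b) = rep b * rep a := by
  decide +kernel

theorem chi_mul_of_mem_q8 : ∀ a ∈ q8, ∀ b ∈ q8, chi (a * b) = chi a * chi b := by
  decide +kernel

theorem chi_inv_of_mem_q8 : ∀ a ∈ q8, chi a⁻¹ = chi a := by decide +kernel

theorem mem_q8_of_mem_H3 {h : G3} (hh : h ∈ H3) : h ∈ q8 := by
  induction hh using Subgroup.closure_induction with
  | mem x hx => rcases hx with rfl | rfl <;> decide +kernel
  | one => decide +kernel
  | mul x y _ _ hx hy => exact mul_mem_q8 x hx y hy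
  | inv x _ hx => exact inv_mem_q8 x hx

theorem actS_mul_of_mem_H3 {g h : G3} (hg : g ∈ H3) (hh : h ∈ H3) (f : S3) :
    actS (g * h) f = actS g (actS h f) := by
  rw [actS_eq_linSubst, rep_mul_of_mem_q8 g (mem_q8_of_mem_H3 hg) h (mem_q8_of_mem_H3 hh),
    linSubst_mul]
  rfl

theorem actS_one (f : S3) : actS 1 f = f := by
  rw [actS_eq_linSubst, show rep 1 = 1 by decide +kernel, linSubst_one, AlgHom.id_apply]

theorem chi_mul_self (g : G3) : chi g * chi g = 1 := by
  unfold chi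
  split_ifs <;> decide

theorem mem_relInv_iff {f : S3} : f ∈ relInv ↔ actS im f = f ∧ actS jm f = -f := by
  have him : im ∈ H3 := Subgroup.subset_closure (by simp)
  have hjm : jm ∈ H3 := Subgroup.subset_closure (by simp)
  have chi_im : chi im = 1 := by decide +kernel
  have chi_jm : chi jm = -1 := by decide +kernel
  constructor
  · intro hf
    rw [hf im him, hf jm hjm, chi_im, chi_jm, one_smul, neg_one_smul]
    exact ⟨rfl, rfl⟩
  · rintro ⟨hi, hj⟩ h hh
    induction hh using Subgroup.closure_induction with
    | mem x hx =>
      rcases hx with rfl | rfl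
      · rw [hi, chi_im, one_smul]
      · rw [hj, chi_jm, neg_one_smul]
    | one => rw [actS_one, show chi 1 = 1 by decide +kernel, one_smul]
    | mul x y hx hy ihx ihy =>
      rw [actS_mul_of_mem_H3 hx hy, ihy, _root_.map_smul, ihx, smul_smul, mul_comm,
        chi_mul_of_mem_q8 x (mem_q8_of_mem_H3 hx) y (mem_q8_of_mem_H3 hy)]
    | inv x hx ihx =>
      calc actS x⁻¹ f = actS x⁻¹ ((chi x * chi x) • f) := by rw [chi_mul_self, one_smul]
        _ = chi x • actS (x⁻¹ * x) f := by
          rw [mul_smul, actS_mul_of_mem_H3 (inv_mem hx) hx, ihx, _root_.map_smul]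
        _ = chi x⁻¹ • f := by
          rw [inv_mul_cancel, actS_one, chi_inv_of_mem_q8 x (mem_q8_of_mem_H3 hx)]

-- `m 0`, `m 1`, `m 2` are the exponents of `x₁`, `x₂`, `x₃`.
def relExps : Set (Fin 3 →₀ ℕ) := {m | Even (m 1 + m 2) ∧ Odd (m 0 + m 1)}

theorem coeff_actS_im (f : S3) (m : Fin 3 →₀ ℕ) :
    coeff m (actS im f) = (-1) ^ (m 1 + m 2) * coeff m f := by
  rw [actS_eq_linSubst, show rep im = diagonal ![1, -1, -1] by decide +kernel,
    coeff_linSubst_diagonal, Fin.prod_univ_three]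
  simp [pow_add]

theorem coeff_actS_jm (f : S3) (m : Fin 3 →₀ ℕ) :
    coeff m (actS jm f) = (-1) ^ (m 0 + m 1) * coeff m f := by
  rw [actS_eq_linSubst, show rep jm = diagonal ![-1, -1, 1] by decide +kernel,
    coeff_linSubst_diagonal, Fin.prod_univ_three]
  simp [pow_add]

theorem relInv_eq_restrictSupport : relInv = restrictSupport F3 relExps := by
  have h2 : (2 : F3) ≠ 0 := by decide
  ext f
  rw [mem_relInv_iff, mem_restrictSupport_iff, MvPolynomial.ext_iff, MvPolynomial.ext_iff]
  simp only [coeff_actS_im, coeff_actS_jm, coeff_neg]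
  constructor
  · rintro ⟨hi, hj⟩ m hm
    have hm : coeff m f ≠ 0 := mem_support_iff.mp hm
    exact ⟨(neg_one_pow_mul_eq_self_iff h2 hm _).1 (hi m),
      (neg_one_pow_mul_eq_neg_self_iff h2 hm _).1 (hj m)⟩
  · intro hf
    refine ⟨fun m => ?_, fun m => ?_⟩ <;> by_cases hm : coeff m f = 0
    · simp [hm]
    · exact (neg_one_pow_mul_eq_self_iff h2 hm _).2 (hf (mem_support_iff.mpr hm)).1
    · simp [hm]
    · exact (neg_one_pow_mul_eq_neg_self_iff h2 hm _).2 (hf (mem_support_iff.mpr hm)).2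

theorem homogeneousSubmodule_inf_relInv (d : ℕ) :
    homogeneousSubmodule (Fin 3) F3 d ⊓ relInv =
      restrictSupport F3 ({m | m.degree = d} ∩ relExps) := by
  ext f
  rw [Submodule.mem_inf, homogeneousSubmodule_eq_finsupp_supported, relInv_eq_restrictSupport]
  exact Set.subset_inter_iff.symm

theorem degree_inter_relExps_zero : {m : Fin 3 →₀ ℕ | m.degree = 0} ∩ relExps = ∅ := by
  ext m
  simp only [relExps, Finsupp.degree_eq_sum, Fin.sum_univ_three, Set.mem_inter_iff,
    Set.mem_ofPred_eq, Set.mem_empty_iff_false, iff_false, Nat.odd_iff]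
  omega

theorem degree_inter_relExps_odd (k : ℕ) :
    {m : Fin 3 →₀ ℕ | m.degree = 2 * k + 1} ∩ relExps =
      {m | m.degree = 2 * k + (Finsupp.single (0 : Fin 3) 1).degree ∧
        ∀ i, m i % 2 = Finsupp.single (0 : Fin 3) 1 i} := by
  ext m
  simp only [relExps, Set.mem_inter_iff, Set.mem_ofPred_eq, Finsupp.degree_eq_sum,
    Fin.sum_univ_three, Fin.forall_fin_succ, Fin.succ_zero_eq_one,
    Fin.succ_one_eq_two, Finsupp.single_apply, Fin.reduceEq, ↓reduceIte, IsEmpty.forall_iff,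
    and_true, Nat.even_iff, Nat.odd_iff]
  omega

theorem degree_inter_relExps_even (k : ℕ) :
    {m : Fin 3 →₀ ℕ | m.degree = 2 * k + 2} ∩ relExps =
      {m | m.degree = 2 * k + (Finsupp.single 1 1 + Finsupp.single 2 1 : Fin 3 →₀ ℕ).degree ∧
        ∀ i, m i % 2 = (Finsupp.single 1 1 + Finsupp.single 2 1 : Fin 3 →₀ ℕ) i} := by
  ext m
  simp only [relExps, Set.mem_inter_iff, Set.mem_ofPred_eq, Finsupp.degree_eq_sum,
    Fin.sum_univ_three, map_add, Finsupp.coe_add, Pi.add_apply,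
    Fin.forall_fin_succ, Fin.succ_zero_eq_one, Fin.succ_one_eq_two, Finsupp.single_apply,
    Fin.reduceEq, ↓reduceIte, IsEmpty.forall_iff, and_true, Nat.even_iff, Nat.odd_iff]
  omega

theorem ncard_degree_inter_relExps (d : ℕ) :
    ({m : Fin 3 →₀ ℕ | m.degree = d} ∩ relExps).ncard = ((d + 1) / 2 + 1).choose 2 := by
  have choose_eq (k : ℕ) : (Fintype.card (Fin 3) + k - 1).choose k = (k + 2).choose 2 := by
    rw [Fintype.card_fin, show 3 + k - 1 = k + 2 by omega, Nat.choose_symm_add]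
  obtain ⟨k, rfl | rfl⟩ := d.even_or_odd'
  · cases k with
    | zero => simp [degree_inter_relExps_zero]
    | succ k =>
      rw [show 2 * (k + 1) = 2 * k + 2 by ring, degree_inter_relExps_even,
        Finsupp.ncard_setOf_degree_and_mod_two_eq (Finsupp.single 1 1 + Finsupp.single 2 1)
          (by simp [Fin.forall_fin_succ]), choose_eq]
      congr 1
      omega
  · rw [degree_inter_relExps_odd, Finsupp.ncard_setOf_degree_and_mod_two_eq (Finsupp.single 0 1)
      (by simp [Fin.forall_fin_succ]), choose_eq]
    congr 1
    omega

theorem finrank_homogeneousSubmodule_inf_relInv (d : ℕ) :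
    Module.finrank F3 ↥(homogeneousSubmodule (Fin 3) F3 d ⊓ relInv) =
      ((d + 1) / 2 + 1).choose 2 := by
  rw [homogeneousSubmodule_inf_relInv, finrank_restrictSupport, ncard_degree_inter_relExps]

theorem homogeneousSubmodule_zero_inf_relInv :
    homogeneousSubmodule (Fin 3) F3 0 ⊓ relInv = ⊥ := by
  rw [homogeneousSubmodule_inf_relInv, degree_inter_relExps_zero]
  refine (Submodule.eq_bot_iff _).2 fun f hf => ?_
  rwa [mem_restrictSupport_iff, Set.subset_empty_iff, Finset.coe_eq_empty, support_eq_empty] at hf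

/-- For every `d ≥ 1`, the `𝔽₃`-dimension of the degree-`d` homogeneous component of
`S^H_χ` equals `C(⌊(d+1)/2⌋ + 1, 2)`, and the degree-0 component is zero; equivalently,
the Hilbert series of `S^H_χ` equals `(t + t²)/(1 - t²)³`. -/
theorem stmt5 :
    (∀ d : ℕ, 1 ≤ d →
      Module.finrank F3 ↥(homogeneousSubmodule (Fin 3) F3 d ⊓ relInv) =
        Nat.choose ((d + 1) / 2 + 1) 2) ∧
    (homogeneousSubmodule (Fin 3) F3 0 ⊓ relInv = ⊥) ∧
    (PowerSeries.mk (fun d =>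
        (Module.finrank F3 ↥(homogeneousSubmodule (Fin 3) F3 d ⊓ relInv) : ℤ)) *
      (1 - PowerSeries.X ^ 2) ^ 3 = PowerSeries.X + PowerSeries.X ^ 2) := by
  refine ⟨fun d _ => finrank_homogeneousSubmodule_inf_relInv d,
    homogeneousSubmodule_zero_inf_relInv, ?_⟩
  simp_rw [finrank_homogeneousSubmodule_inf_relInv]
  exact PowerSeries.mk_choose_div_two_mul_one_sub_X_sq_pow_three
end

section
/- A polynomial f ∈ S is a χ-relative H-invariant if and only if every monomial x₁^i x₂^j x₃^k occurring in f with nonzero coefficient satisfies j ≡ k (mod 2) and i ≢ j (mod 2). -/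
open Matrix MvPolynomial

set_option synthInstance.maxHeartbeats 1000000
set_option maxHeartbeats 1000000

/-!
Each element `h` of `H` acts on the basis `x₁, x₂, x₃` of `M*` by a diagonal sign matrix
`diag(η, ηε, ε)` with `η = χ(h)`. Hence every monomial `x₁^a x₂^b x₃^c` is an eigenvector of `h`,
with eigenvalue `η^(a+b) ε^(b+c)`, and `f` is a `χ`-relative invariant exactly when each of its
monomials is. For `i` (`η = 1`, `ε = -1`) and `j` (`η = -1`, `ε = 1`) this says that `b + c` is
even and `a + b` is odd, and these two parities make `η^(a+b) ε^(b+c) = η` for every sign pair.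
-/

section DiagonalSubstitution

variable {σ R : Type*} [Fintype σ] [CommRing R]

theorem aeval_smul_X_monomial (d : σ → R) (u : σ →₀ ℕ) (a : R) :
    aeval (fun s => d s • X s) (monomial u a) = (∏ s, d s ^ u s) • monomial u a := by
  rw [aeval_monomial, Finsupp.prod_fintype _ _ fun _ => pow_zero _]
  simp only [smul_pow, Finset.prod_smul]
  rw [mul_smul_comm, monomial_eq, Finsupp.prod_fintype _ _ fun _ => pow_zero _, algebraMap_eq]

theorem coeff_aeval_smul_X (d : σ → R) (f : MvPolynomial σ R) (m : σ →₀ ℕ) :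
    coeff m (aeval (fun s => d s • X s) f) = (∏ s, d s ^ m s) * coeff m f := by
  classical
  induction f using MvPolynomial.induction_on' with
  | monomial u a =>
    rw [aeval_smul_X_monomial, coeff_smul, coeff_monomial, smul_eq_mul]
    split_ifs with h
    · rw [h]
    · rw [mul_zero, mul_zero]
  | add p q hp hq => rw [map_add, coeff_add, coeff_add, hp, hq, mul_add]

theorem aeval_smul_X_eq_smul_iff [IsDomain R] (d : σ → R) (c : R) (f : MvPolynomial σ R) :
    aeval (fun s => d s • X s) f = c • f ↔ ∀ m ∈ f.support, ∏ s, d s ^ m s = c := by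
  simp only [MvPolynomial.ext_iff, coeff_aeval_smul_X, coeff_smul, smul_eq_mul, mem_support_iff]
  refine forall_congr' fun m => ⟨fun h hm => mul_right_cancel₀ hm h, fun h => ?_⟩
  by_cases hm : coeff m f = 0
  · rw [hm, mul_zero, mul_zero]
  · rw [h hm]

end DiagonalSubstitution

theorem actS_eq_aeval_of_rep_eq_diagonal {g : G3} {d : Fin 3 → F3} (h : rep g = diagonal d) :
    actS g = aeval fun s => d s • X s := by
  rw [actS, h]
  congr 1
  funext s
  simp [diagonal_apply]

def quaternionList : List G3 :=
  [1, -1, im, -im, jm, -jm, im * jm, -(im * jm)]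

theorem mem_quaternionList_of_mem_H3 {g : G3} (hg : g ∈ H3) : g ∈ quaternionList := by
  refine Subgroup.closure_induction (p := fun g _ => g ∈ quaternionList) ?_ ?_ ?_ ?_ hg
  · rintro x (rfl | rfl) <;> decide +kernel
  · decide +kernel
  · have mul_mem : ∀ x ∈ quaternionList, ∀ y ∈ quaternionList, x * y ∈ quaternionList := by
      decide +kernel
    exact fun x y _ _ hx hy => mul_mem x hx y hy
  · have inv_mem : ∀ x ∈ quaternionList, x⁻¹ ∈ quaternionList := by decide +kernel
    exact fun x _ hx => inv_mem x hx

theorem rep_eq_diagonal_of_mem_quaternionList :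
    ∀ g ∈ quaternionList, ∃ ε ∈ [(1 : F3), -1], ∃ η ∈ [(1 : F3), -1],
      rep g = diagonal ![η, η * ε, ε] ∧ chi g = η := by
  decide +kernel

theorem exists_rep_eq_diagonal_of_mem_H3 {g : G3} (hg : g ∈ H3) :
    ∃ ε η : F3, ε ^ 2 = 1 ∧ η ^ 2 = 1 ∧ rep g = diagonal ![η, η * ε, ε] ∧ chi g = η := by
  obtain ⟨ε, hε, η, hη, h⟩ :=
    rep_eq_diagonal_of_mem_quaternionList g (mem_quaternionList_of_mem_H3 hg)
  have sq_eq_one : ∀ x ∈ [(1 : F3), -1], x ^ 2 = 1 := by decide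
  exact ⟨ε, η, sq_eq_one ε hε, sq_eq_one η hη, h⟩

theorem actS_eq_chi_smul_iff {g : G3} {ε η : F3} (hrep : rep g = diagonal ![η, η * ε, ε])
    (hchi : chi g = η) (f : S3) :
    actS g f = chi g • f ↔ ∀ m ∈ f.support, η ^ (m 0 + m 1) * ε ^ (m 1 + m 2) = η := by
  rw [actS_eq_aeval_of_rep_eq_diagonal hrep, aeval_smul_X_eq_smul_iff, hchi]
  refine forall₂_congr fun m _ => ?_
  have eigenvalue : ∏ s, ![η, η * ε, ε] s ^ m s = η ^ (m 0 + m 1) * ε ^ (m 1 + m 2) := by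
    simp only [Fin.prod_univ_three, cons_val_zero, cons_val_one, cons_val_two, head_cons,
      tail_cons]
    ring
  rw [eigenvalue]

/-- A polynomial `f ∈ S` is a `χ`-relative `H`-invariant if and only if every monomial
`x₁^i x₂^j x₃^k` occurring in `f` with nonzero coefficient satisfies `j ≡ k (mod 2)`
and `i ≢ j (mod 2)`. -/
theorem stmt6 (f : S3) :
    (∀ h ∈ H3, actS h f = chi h • f) ↔
      ∀ m ∈ f.support, m 1 % 2 = m 2 % 2 ∧ m 0 % 2 ≠ m 1 % 2 := by
  constructor
  · intro hf m hm
    have h12 := (actS_eq_chi_smul_iff (ε := -1) (η := 1) (by decide +kernel) (by decide +kernel)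
      f).1 (hf im (Subgroup.subset_closure (Set.mem_insert _ _))) m hm
    have h01 := (actS_eq_chi_smul_iff (ε := 1) (η := -1) (by decide +kernel) (by decide +kernel)
      f).1 (hf jm (Subgroup.subset_closure (Set.mem_insert_of_mem _ rfl))) m hm
    simp only [one_pow, one_mul, mul_one, neg_one_pow_eq_one_iff_even (R := F3) (by decide),
      neg_one_pow_eq_neg_one_iff_odd (R := F3) (by decide), Nat.even_iff, Nat.odd_iff] at h12 h01
    omega
  · intro hf g hg
    obtain ⟨ε, η, hε, hη, hrep, hchi⟩ := exists_rep_eq_diagonal_of_mem_H3 hg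
    refine (actS_eq_chi_smul_iff hrep hchi f).2 fun m hm => ?_
    have h12 : (m 1 + m 2) % 2 = 0 := by have := hf m hm; omega
    have h01 : (m 0 + m 1) % 2 = 1 := by have := hf m hm; omega
    rw [pow_eq_pow_mod _ hη, pow_eq_pow_mod _ hε, h01, h12, pow_one, pow_zero, mul_one]
end

section
/- Every χ-relative H-invariant f ∈ S can be written uniquely as f = P(x₁²,x₂²,x₃²)·x₁ + Q(x₁²,x₂²,x₃²)·x₂x₃ with P, Q ∈ 𝔽₃[T₁,T₂,T₃], and conversely every polynomial of this form is a χ-relative H-invariant; i.e., S^H_χ is a free module over the subalgebra 𝔽₃[x₁²,x₂²,x₃²] with basis {x₁, x₂x₃}. -/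
open Matrix MvPolynomial

set_option synthInstance.maxHeartbeats 1000000
set_option maxHeartbeats 1000000

/-- `Ψ(P, Q) = P(x₁²,x₂²,x₃²)·x₁ + Q(x₁²,x₂²,x₃²)·x₂x₃`. -/
noncomputable def Psi8 (pq : MvPolynomial (Fin 3) F3 × MvPolynomial (Fin 3) F3) : S3 :=
  aeval ![X 0 ^ 2, X 1 ^ 2, X 2 ^ 2] pq.1 * X 0 +
    aeval ![X 0 ^ 2, X 1 ^ 2, X 2 ^ 2] pq.2 * (X 1 * X 2)


set_option maxRecDepth 100000

section Aux

/-! ### The explicit eight-element subgroup containing `H3` -/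

def Kl : List (Matrix (Fin 2) (Fin 2) F3) :=
  [1, -1, !![0, 1; -1, 0], -!![0, 1; -1, 0], !![1, -1; -1, -1], -!![1, -1; -1, -1],
   !![-1, -1; -1, 1], -!![-1, -1; -1, 1]]

lemma Kl_mul : ∀ A ∈ Kl, ∀ B ∈ Kl, A * B ∈ Kl := by decide
lemma Kl_adj : ∀ A ∈ Kl, Matrix.adjugate A ∈ Kl := by decide

def K : Subgroup G3 where
  carrier := {g | (g : Matrix (Fin 2) (Fin 2) F3) ∈ Kl}
  mul_mem' := fun ha hb => Kl_mul _ ha _ hb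
  one_mem' := by show (1 : Matrix (Fin 2) (Fin 2) F3) ∈ Kl; decide
  inv_mem' := by
    intro g hg
    show ((g⁻¹ : G3) : Matrix (Fin 2) (Fin 2) F3) ∈ Kl
    rw [Matrix.SpecialLinearGroup.coe_inv]
    exact Kl_adj _ hg

lemma H3_le_K : H3 ≤ K := by
  rw [H3, Subgroup.closure_le]
  intro g hg
  rcases hg with rfl | rfl <;> · show _ ∈ Kl; decide

/-! ### Diagonal substitutions and their coefficients -/

lemma aeval_diag_monomial (d : Fin 3 → F3) (m : Fin 3 →₀ ℕ) (c : F3) :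
    aeval (fun i => d i • (X i : S3)) (monomial m c) = (∏ i, d i ^ m i) • monomial m c := by
  rw [aeval_monomial, monomial_eq]
  have h1 : (m.prod fun n e => (d n • (X n : S3)) ^ e)
      = C (∏ i ∈ m.support, d i ^ m i) * m.prod fun n e => (X n : S3) ^ e := by
    rw [Finsupp.prod, Finsupp.prod, map_prod, ← Finset.prod_mul_distrib]
    exact Finset.prod_congr rfl fun i _ => by rw [smul_pow, smul_eq_C_mul]
  have h2 : (∏ i : Fin 3, d i ^ m i) = ∏ i ∈ m.support, d i ^ m i :=
    (Finset.prod_subset (Finset.subset_univ _)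
      (fun x _ hx => by rw [Finsupp.notMem_support_iff.mp hx, pow_zero])).symm
  rw [h1, h2, smul_eq_C_mul, algebraMap_eq]
  ring

lemma coeff_aeval_diag (d : Fin 3 → F3) (f : S3) (m : Fin 3 →₀ ℕ) :
    coeff m (aeval (fun i => d i • (X i : S3)) f) = (∏ i, d i ^ m i) * coeff m f := by
  conv_lhs => rw [f.as_sum, map_sum]
  simp only [aeval_diag_monomial, coeff_smul, coeff_sum, coeff_monomial, smul_eq_mul,
    mul_ite, mul_zero]
  rw [Finset.sum_ite_eq' f.support m (fun v => (∏ i, d i ^ v i) * coeff v f)]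
  by_cases hm : m ∈ f.support
  · simp [hm]
  · simp [hm, notMem_support_iff.mp hm]

lemma diag_inv_iff (d : Fin 3 → F3) (c : F3) (f : S3) :
    aeval (fun i => d i • (X i : S3)) f = c • f ↔ ∀ m ∈ f.support, (∏ i, d i ^ m i) = c := by
  constructor
  · intro hEq m hm
    have h := congrArg (coeff m) hEq
    rw [coeff_aeval_diag, coeff_smul, smul_eq_mul] at h
    exact mul_right_cancel₀ (mem_support_iff.mp hm) h
  · intro hAll
    ext m
    rw [coeff_aeval_diag, coeff_smul, smul_eq_mul]
    by_cases hm : m ∈ f.support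
    · rw [hAll m hm]
    · rw [notMem_support_iff.mp hm, mul_zero, mul_zero]

/-! ### `actS` of elements of `H` is a diagonal substitution -/

lemma rep_adj (h : G3) :
    rep h = Matrix.of fun s r =>
      coordM s (Matrix.adjugate (h : Matrix (Fin 2) (Fin 2) F3) * V r *
        (h : Matrix (Fin 2) (Fin 2) F3)) := by
  funext s r
  simp [rep, Matrix.SpecialLinearGroup.coe_inv]

lemma rep_of_coe (h : G3) (M : Matrix (Fin 2) (Fin 2) F3)
    (hM : (h : Matrix (Fin 2) (Fin 2) F3) = M) :
    rep h = Matrix.of fun s r => coordM s (Matrix.adjugate M * V r * M) := by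
  rw [rep_adj, hM]

lemma actS_diag (h : G3) (d : Fin 3 → F3)
    (hd : rep h = Matrix.of ![![d 0, 0, 0], ![0, d 1, 0], ![0, 0, d 2]]) (f : S3) :
    actS h f = aeval (fun i => d i • (X i : S3)) f := by
  have hfun : (fun s => ∑ r : Fin 3, rep h s r • (X r : S3)) = fun i => d i • X i := by
    funext s
    fin_cases s <;> simp [hd, Fin.sum_univ_three]
  rw [actS, hfun]

/-! ### Parity bookkeeping -/

def Ev1 (m : Fin 3 →₀ ℕ) : Prop := m 0 % 2 = 1 ∧ m 1 % 2 = 0 ∧ m 2 % 2 = 0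
def Ev2 (m : Fin 3 →₀ ℕ) : Prop := m 0 % 2 = 0 ∧ m 1 % 2 = 1 ∧ m 2 % 2 = 1
instance (m : Fin 3 →₀ ℕ) : Decidable (Ev1 m) := by unfold Ev1; infer_instance
instance (m : Fin 3 →₀ ℕ) : Decidable (Ev2 m) := by unfold Ev2; infer_instance
def SignOK (m : Fin 3 →₀ ℕ) : Prop := Ev1 m ∨ Ev2 m

lemma pow_pm (a : F3) (ha : a = 1 ∨ a = -1) (n : ℕ) :
    a ^ n = if n % 2 = 0 then 1 else a := by
  rcases ha with rfl | rfl
  · simp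
  · rcases Nat.even_or_odd n with h | h
    · rw [h.neg_one_pow]; simp [Nat.even_iff.mp h]
    · rw [h.neg_one_pow]; simp [Nat.odd_iff.mp h]

lemma prod_of_SignOK (d : Fin 3 → F3) (c : F3) (hpm : ∀ i, d i = 1 ∨ d i = -1)
    (ha : d 0 = c) (hb : d 1 * d 2 = c) (m : Fin 3 →₀ ℕ) (hm : SignOK m) :
    ∏ i, d i ^ m i = c := by
  rw [Fin.prod_univ_three, pow_pm _ (hpm 0), pow_pm _ (hpm 1), pow_pm _ (hpm 2)]
  rcases hm with ⟨h0, h1, h2⟩ | ⟨h0, h1, h2⟩ <;> rw [h0, h1, h2] <;> simp [ha, hb]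

lemma signOK_of_prods (m : Fin 3 →₀ ℕ)
    (hI : ∏ i, (![1, -1, -1] : Fin 3 → F3) i ^ m i = 1)
    (hJ : ∏ i, (![-1, -1, 1] : Fin 3 → F3) i ^ m i = -1) : SignOK m := by
  rw [Fin.prod_univ_three] at hI hJ
  simp only [Matrix.cons_val_zero, Matrix.cons_val_one, Matrix.head_cons,
    Matrix.cons_val_two, Matrix.tail_cons] at hI hJ
  rw [pow_pm 1 (Or.inl rfl), pow_pm (-1) (Or.inr rfl), pow_pm (-1) (Or.inr rfl)] at hI
  rw [pow_pm (-1) (Or.inr rfl), pow_pm (-1) (Or.inr rfl), pow_pm 1 (Or.inl rfl)] at hJ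
  rcases Nat.mod_two_eq_zero_or_one (m 0) with h0 | h0 <;>
  rcases Nat.mod_two_eq_zero_or_one (m 1) with h1 | h1 <;>
  rcases Nat.mod_two_eq_zero_or_one (m 2) with h2 | h2 <;>
  rw [h0, h1, h2] at hI hJ <;> simp at hI hJ <;>
  first
    | (left; exact ⟨h0, h1, h2⟩)
    | (right; exact ⟨h0, h1, h2⟩)
    | exact absurd hI (by decide)
    | exact absurd hJ (by decide)

/-! ### The membership criterion -/

lemma case_helper (h : G3) (f : S3) (d : Fin 3 → F3) (c : F3)
    (hd : rep h = Matrix.of ![![d 0, 0, 0], ![0, d 1, 0], ![0, 0, d 2]])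
    (hc : chi h = c) (hpm : ∀ i, d i = 1 ∨ d i = -1) (ha : d 0 = c) (hb : d 1 * d 2 = c)
    (hs : ∀ m ∈ f.support, SignOK m) : actS h f = chi h • f := by
  rw [actS_diag h d hd, hc, diag_inv_iff]
  exact fun m hm => prod_of_SignOK d c hpm ha hb m (hs m hm)

lemma mem_iff (f : S3) :
    (∀ h ∈ H3, actS h f = chi h • f) ↔ ∀ m ∈ f.support, SignOK m := by
  constructor
  · intro hf
    have him : im ∈ H3 := Subgroup.subset_closure (by left; rfl)
    have hjm : jm ∈ H3 := Subgroup.subset_closure (by right; rfl)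
    have hdI : rep im = Matrix.of ![![(![1, -1, -1] : Fin 3 → F3) 0, 0, 0],
        ![0, (![1, -1, -1] : Fin 3 → F3) 1, 0], ![0, 0, (![1, -1, -1] : Fin 3 → F3) 2]] := by
      rw [rep_of_coe im _ rfl]; decide
    have hdJ : rep jm = Matrix.of ![![(![-1, -1, 1] : Fin 3 → F3) 0, 0, 0],
        ![0, (![-1, -1, 1] : Fin 3 → F3) 1, 0], ![0, 0, (![-1, -1, 1] : Fin 3 → F3) 2]] := by
      rw [rep_of_coe jm _ rfl]; decide
    have hchiI : chi im = 1 := by rw [chi]; decide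
    have hchiJ : chi jm = -1 := by rw [chi]; decide
    have hI : aeval (fun i => (![1, -1, -1] : Fin 3 → F3) i • (X i : S3)) f = (1 : F3) • f := by
      rw [← actS_diag im _ hdI, hf im him, hchiI]
    have hJ : aeval (fun i => (![-1, -1, 1] : Fin 3 → F3) i • (X i : S3)) f
        = (-1 : F3) • f := by
      rw [← actS_diag jm _ hdJ, hf jm hjm, hchiJ]
    intro m hm
    exact signOK_of_prods m ((diag_inv_iff _ _ f).mp hI m hm) ((diag_inv_iff _ _ f).mp hJ m hm)
  · intro hs h hh
    have hK : (h : Matrix (Fin 2) (Fin 2) F3) ∈ Kl := H3_le_K hh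
    simp only [Kl, List.mem_cons, List.not_mem_nil, or_false] at hK
    rcases hK with hM | hM | hM | hM | hM | hM | hM | hM
    · exact case_helper h f ![1, 1, 1] 1 (by rw [rep_of_coe h _ hM]; decide)
        (by rw [chi, hM]; decide) (by decide) (by decide) (by decide) hs
    · exact case_helper h f ![1, 1, 1] 1 (by rw [rep_of_coe h _ hM]; decide)
        (by rw [chi, hM]; decide) (by decide) (by decide) (by decide) hs
    · exact case_helper h f ![1, -1, -1] 1 (by rw [rep_of_coe h _ hM]; decide)
        (by rw [chi, hM]; decide) (by decide) (by decide) (by decide) hs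
    · exact case_helper h f ![1, -1, -1] 1 (by rw [rep_of_coe h _ hM]; decide)
        (by rw [chi, hM]; decide) (by decide) (by decide) (by decide) hs
    · exact case_helper h f ![-1, -1, 1] (-1) (by rw [rep_of_coe h _ hM]; decide)
        (by rw [chi, hM]; decide) (by decide) (by decide) (by decide) hs
    · exact case_helper h f ![-1, -1, 1] (-1) (by rw [rep_of_coe h _ hM]; decide)
        (by rw [chi, hM]; decide) (by decide) (by decide) (by decide) hs
    · exact case_helper h f ![-1, 1, -1] (-1) (by rw [rep_of_coe h _ hM]; decide)
        (by rw [chi, hM]; decide) (by decide) (by decide) (by decide) hs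
    · exact case_helper h f ![-1, 1, -1] (-1) (by rw [rep_of_coe h _ hM]; decide)
        (by rw [chi, hM]; decide) (by decide) (by decide) (by decide) hs

/-! ### Coefficients of `Psi8` -/

noncomputable def emb1 (n : Fin 3 →₀ ℕ) : Fin 3 →₀ ℕ := 2 • n + Finsupp.single 0 1
noncomputable def emb2 (n : Fin 3 →₀ ℕ) : Fin 3 →₀ ℕ :=
  2 • n + Finsupp.single 1 1 + Finsupp.single 2 1
noncomputable def halfm (m : Fin 3 →₀ ℕ) : Fin 3 →₀ ℕ := m.mapRange (· / 2) (Nat.zero_div _)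

lemma emb1_apply (n : Fin 3 →₀ ℕ) (i : Fin 3) :
    emb1 n i = 2 * n i + (if i = 0 then 1 else 0) := by
  simp [emb1, Finsupp.single_apply, eq_comm, two_mul, two_smul]
lemma emb2_apply (n : Fin 3 →₀ ℕ) (i : Fin 3) :
    emb2 n i = 2 * n i + (if i = 1 then 1 else 0) + (if i = 2 then 1 else 0) := by
  simp [emb2, Finsupp.single_apply, eq_comm, two_mul, two_smul, add_assoc]

lemma halfm_apply (m : Fin 3 →₀ ℕ) (i : Fin 3) : halfm m i = m i / 2 := by
  simp [halfm]

lemma emb1_0 (n : Fin 3 →₀ ℕ) : emb1 n 0 = 2 * n 0 + 1 := by rw [emb1_apply]; simp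
lemma emb1_1 (n : Fin 3 →₀ ℕ) : emb1 n 1 = 2 * n 1 := by rw [emb1_apply]; simp
lemma emb1_2 (n : Fin 3 →₀ ℕ) : emb1 n 2 = 2 * n 2 := by rw [emb1_apply]; simp
lemma emb2_0 (n : Fin 3 →₀ ℕ) : emb2 n 0 = 2 * n 0 := by rw [emb2_apply]; simp
lemma emb2_1 (n : Fin 3 →₀ ℕ) : emb2 n 1 = 2 * n 1 + 1 := by rw [emb2_apply]; simp
lemma emb2_2 (n : Fin 3 →₀ ℕ) : emb2 n 2 = 2 * n 2 + 1 := by rw [emb2_apply]; simp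

lemma Ev1_emb1 (n : Fin 3 →₀ ℕ) : Ev1 (emb1 n) := by
  refine ⟨?_, ?_, ?_⟩ <;> rw [emb1_apply] <;> simp <;> omega
lemma Ev2_emb2 (n : Fin 3 →₀ ℕ) : Ev2 (emb2 n) := by
  refine ⟨?_, ?_, ?_⟩ <;> rw [emb2_apply] <;> simp <;> omega

lemma Ev1_not_Ev2 (m : Fin 3 →₀ ℕ) (h : Ev1 m) : ¬ Ev2 m := fun h' => by
  have := h.1; have := h'.1; omega

lemma halfm_emb1 (n : Fin 3 →₀ ℕ) : halfm (emb1 n) = n := by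
  ext i; rw [halfm_apply, emb1_apply]; by_cases h : i = 0 <;> simp [h] <;> omega
lemma halfm_emb2 (n : Fin 3 →₀ ℕ) : halfm (emb2 n) = n := by
  ext i
  rw [halfm_apply, emb2_apply]
  by_cases h1 : i = 1 <;> by_cases h2 : i = 2 <;> simp [h1, h2] <;> omega

lemma emb1_halfm (m : Fin 3 →₀ ℕ) (hm : Ev1 m) : emb1 (halfm m) = m := by
  obtain ⟨h0, h1, h2⟩ := hm
  ext i
  rw [emb1_apply, halfm_apply]
  fin_cases i <;> simp_all <;> omega
lemma emb2_halfm (m : Fin 3 →₀ ℕ) (hm : Ev2 m) : emb2 (halfm m) = m := by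
  obtain ⟨h0, h1, h2⟩ := hm
  ext i
  rw [emb2_apply, halfm_apply]
  fin_cases i <;> simp_all <;> omega

lemma monomial_eq_prod (n : Fin 3 →₀ ℕ) (c : F3) :
    monomial n c = C c * ∏ i, (X i : S3) ^ n i := by
  rw [monomial_eq]
  congr 1
  rw [Finsupp.prod]
  refine Finset.prod_subset (Finset.subset_univ _) fun x _ hx => ?_
  simp [Finsupp.notMem_support_iff.mp hx]

lemma aeval_sq_monomial1 (n : Fin 3 →₀ ℕ) (c : F3) :
    aeval (fun i => (X i : S3) ^ 2) (monomial n c) * X 0 = monomial (emb1 n) c := by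
  rw [aeval_monomial, monomial_eq_prod]
  have h : (n.prod fun i e => ((X i : S3) ^ 2) ^ e) = ∏ i, ((X i : S3) ^ 2) ^ n i := by
    rw [Finsupp.prod]
    refine Finset.prod_subset (Finset.subset_univ _) fun x _ hx => ?_
    simp [Finsupp.notMem_support_iff.mp hx]
  rw [h, Fin.prod_univ_three, Fin.prod_univ_three]
  simp only [← pow_mul, emb1_0, emb1_1, emb1_2, algebraMap_eq, pow_add, pow_mul, pow_one]
  ring

lemma aeval_sq_monomial2 (n : Fin 3 →₀ ℕ) (c : F3) :
    aeval (fun i => (X i : S3) ^ 2) (monomial n c) * (X 1 * X 2) = monomial (emb2 n) c := by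
  rw [aeval_monomial, monomial_eq_prod]
  have h : (n.prod fun i e => ((X i : S3) ^ 2) ^ e) = ∏ i, ((X i : S3) ^ 2) ^ n i := by
    rw [Finsupp.prod]
    refine Finset.prod_subset (Finset.subset_univ _) fun x _ hx => ?_
    simp [Finsupp.notMem_support_iff.mp hx]
  rw [h, Fin.prod_univ_three, Fin.prod_univ_three]
  simp only [← pow_mul, emb2_0, emb2_1, emb2_2, algebraMap_eq, pow_add, pow_mul, pow_one]
  ring

lemma coeff_term1 (P : S3) (m : Fin 3 →₀ ℕ) :
    coeff m (aeval (fun i => (X i : S3) ^ 2) P * X 0) =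
      if Ev1 m then coeff (halfm m) P else 0 := by
  conv_lhs => rw [P.as_sum, map_sum, Finset.sum_mul]
  simp only [aeval_sq_monomial1]
  rw [coeff_sum]
  simp only [coeff_monomial]
  by_cases hEv : Ev1 m
  · have hcond : ∀ n : Fin 3 →₀ ℕ, (emb1 n = m) = (n = halfm m) := fun n =>
      propext ⟨fun h => by rw [← h, halfm_emb1], fun h => by rw [h, emb1_halfm m hEv]⟩
    simp only [hcond]
    rw [Finset.sum_ite_eq' P.support (halfm m) (fun n => coeff n P), if_pos hEv]
    by_cases hsup : halfm m ∈ P.support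
    · rw [if_pos hsup]
    · rw [if_neg hsup, (notMem_support_iff.mp hsup)]
  · rw [if_neg hEv]
    exact Finset.sum_eq_zero fun n _ => if_neg fun h => hEv (by rw [← h]; exact Ev1_emb1 n)

lemma coeff_term2 (Q : S3) (m : Fin 3 →₀ ℕ) :
    coeff m (aeval (fun i => (X i : S3) ^ 2) Q * (X 1 * X 2)) =
      if Ev2 m then coeff (halfm m) Q else 0 := by
  conv_lhs => rw [Q.as_sum, map_sum, Finset.sum_mul]
  simp only [aeval_sq_monomial2]
  rw [coeff_sum]
  simp only [coeff_monomial]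
  by_cases hEv : Ev2 m
  · have hcond : ∀ n : Fin 3 →₀ ℕ, (emb2 n = m) = (n = halfm m) := fun n =>
      propext ⟨fun h => by rw [← h, halfm_emb2], fun h => by rw [h, emb2_halfm m hEv]⟩
    simp only [hcond]
    rw [Finset.sum_ite_eq' Q.support (halfm m) (fun n => coeff n Q), if_pos hEv]
    by_cases hsup : halfm m ∈ Q.support
    · rw [if_pos hsup]
    · rw [if_neg hsup, (notMem_support_iff.mp hsup)]
  · rw [if_neg hEv]
    exact Finset.sum_eq_zero fun n _ => if_neg fun h => hEv (by rw [← h]; exact Ev2_emb2 n)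

lemma vec_sq : (![X 0 ^ 2, X 1 ^ 2, X 2 ^ 2] : Fin 3 → S3) = fun i => (X i : S3) ^ 2 := by
  funext i
  fin_cases i <;> rfl

lemma coeff_Psi8 (pq : MvPolynomial (Fin 3) F3 × MvPolynomial (Fin 3) F3) (m : Fin 3 →₀ ℕ) :
    coeff m (Psi8 pq) = (if Ev1 m then coeff (halfm m) pq.1 else 0) +
      (if Ev2 m then coeff (halfm m) pq.2 else 0) := by
  rw [Psi8, vec_sq, coeff_add, coeff_term1, coeff_term2]

end Aux

/-- Every `χ`-relative `H`-invariant is uniquely of the form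
`P(x₁²,x₂²,x₃²)·x₁ + Q(x₁²,x₂²,x₃²)·x₂x₃` and conversely: `S^H_χ` is a free module over
`𝔽₃[x₁²,x₂²,x₃²]` with basis `{x₁, x₂x₃}`. -/
theorem stmt8 :
    Function.Injective Psi8 ∧
    Set.range Psi8 = {f : S3 | ∀ h ∈ H3, actS h f = chi h • f} := by
  constructor
  · intro pq pq' hEq
    have hP : pq.1 = pq'.1 := by
      ext n
      have h := congrArg (coeff (emb1 n)) hEq
      rw [coeff_Psi8, coeff_Psi8, if_pos (Ev1_emb1 n), if_pos (Ev1_emb1 n),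
        if_neg (Ev1_not_Ev2 _ (Ev1_emb1 n)), if_neg (Ev1_not_Ev2 _ (Ev1_emb1 n)),
        halfm_emb1, add_zero, add_zero] at h
      exact h
    have hQ : pq.2 = pq'.2 := by
      ext n
      have h := congrArg (coeff (emb2 n)) hEq
      rw [coeff_Psi8, coeff_Psi8, if_neg (fun h' => Ev1_not_Ev2 _ h' (Ev2_emb2 n)),
        if_neg (fun h' => Ev1_not_Ev2 _ h' (Ev2_emb2 n)), if_pos (Ev2_emb2 n),
        if_pos (Ev2_emb2 n), halfm_emb2, zero_add, zero_add] at h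
      exact h
    exact Prod.ext hP hQ
  · ext f
    constructor
    · rintro ⟨pq, rfl⟩
      show ∀ h ∈ H3, actS h (Psi8 pq) = chi h • (Psi8 pq)
      rw [mem_iff]
      intro m hm
      by_contra hno
      have h1 : ¬ Ev1 m := fun h => hno (Or.inl h)
      have h2 : ¬ Ev2 m := fun h => hno (Or.inr h)
      have : coeff m (Psi8 pq) = 0 := by rw [coeff_Psi8, if_neg h1, if_neg h2, add_zero]
      exact mem_support_iff.mp hm this
    · intro hf
      have hs : ∀ m ∈ f.support, SignOK m := (mem_iff f).mp hf
      set P : S3 := ∑ m ∈ f.support.filter Ev1, monomial (halfm m) (coeff m f) with hPdef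
      set Q : S3 := ∑ m ∈ f.support.filter Ev2, monomial (halfm m) (coeff m f) with hQdef
      refine ⟨(P, Q), ?_⟩
      ext m
      rw [coeff_Psi8]
      dsimp only
      have hcoeffP : Ev1 m → coeff (halfm m) P = coeff m f := by
        intro hEv
        rw [hPdef, coeff_sum]
        simp only [coeff_monomial]
        have hcond : ∀ m' ∈ f.support.filter Ev1,
            (if halfm m' = halfm m then coeff m' f else 0)
              = if m' = m then coeff m' f else 0 := by
          intro m' hm'
          have hEv' : Ev1 m' := (Finset.mem_filter.mp hm').2
          congr 1
          refine propext ⟨fun h => ?_, fun h => by rw [h]⟩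
          rw [← emb1_halfm m' hEv', h, emb1_halfm m hEv]
        rw [Finset.sum_congr rfl hcond,
          Finset.sum_ite_eq' (f.support.filter Ev1) m (fun m' => coeff m' f)]
        by_cases hmem : m ∈ f.support
        · rw [if_pos (Finset.mem_filter.mpr ⟨hmem, hEv⟩)]
        · rw [if_neg (fun h => hmem (Finset.mem_filter.mp h).1), notMem_support_iff.mp hmem]
      have hcoeffQ : Ev2 m → coeff (halfm m) Q = coeff m f := by
        intro hEv
        rw [hQdef, coeff_sum]
        simp only [coeff_monomial]
        have hcond : ∀ m' ∈ f.support.filter Ev2,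
            (if halfm m' = halfm m then coeff m' f else 0)
              = if m' = m then coeff m' f else 0 := by
          intro m' hm'
          have hEv' : Ev2 m' := (Finset.mem_filter.mp hm').2
          congr 1
          refine propext ⟨fun h => ?_, fun h => by rw [h]⟩
          rw [← emb2_halfm m' hEv', h, emb2_halfm m hEv]
        rw [Finset.sum_congr rfl hcond,
          Finset.sum_ite_eq' (f.support.filter Ev2) m (fun m' => coeff m' f)]
        by_cases hmem : m ∈ f.support
        · rw [if_pos (Finset.mem_filter.mpr ⟨hmem, hEv⟩)]
        · rw [if_neg (fun h => hmem (Finset.mem_filter.mp h).1), notMem_support_iff.mp hmem]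
      by_cases h1 : Ev1 m
      · rw [if_pos h1, if_neg (Ev1_not_Ev2 m h1), hcoeffP h1, add_zero]
      · by_cases h2 : Ev2 m
        · rw [if_neg h1, if_pos h2, hcoeffQ h2, zero_add]
        · rw [if_neg h1, if_neg h2, add_zero]
          by_cases hmem : m ∈ f.support
          · exact absurd (hs m hmem) (fun h => h.elim h1 h2)
          · exact (notMem_support_iff.mp hmem).symm
end
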